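/- Let ε > 0, γ = 2 − ε/2, m = ⌈40/(3ε²)⌉, and for a vector α ∈ [2+ε, 6]^m define Ψ(α) = −2γ + Σ_{i=1}^m [(α_i²/2 − 2α_i) − (γ²/2 − 2γ)]. Then Ψ(α) ≥ 1. -/
import Mathlib


/-- With ε > 0, γ = 2 − ε/2, m = ⌈40/(3ε²)⌉, and α ∈ [2+ε,6]^m, the quantity
Ψ(α) = −2γ + Σᵢ [(αᵢ²/2 − 2αᵢ) − (γ²/2 − 2γ)] is at least 1. -/
theorem stmt2 (ε γ : ℝ) (hε : 0 < ε) (hγ : γ = 2 - ε / 2)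
    (m : ℕ) (hm : m = ⌈40 / (3 * ε ^ 2)⌉₊)
    (α : Fin m → ℝ) (hα : ∀ i, 2 + ε ≤ α i ∧ α i ≤ 6) :
    1 ≤ -2 * γ + ∑ i, ((α i) ^ 2 / 2 - 2 * α i - (γ ^ 2 / 2 - 2 * γ)) := by
  have hterm : ∀ i, 3 * ε ^ 2 / 8 ≤ (α i) ^ 2 / 2 - 2 * α i - (γ ^ 2 / 2 - 2 * γ) := by
    intro i
    obtain ⟨h1, h2⟩ := hα i
    nlinarith [sq_nonneg (α i - 2 - ε)]
  have hsum : (m : ℝ) * (3 * ε ^ 2 / 8) ≤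
      ∑ i, ((α i) ^ 2 / 2 - 2 * α i - (γ ^ 2 / 2 - 2 * γ)) := by
    calc (m : ℝ) * (3 * ε ^ 2 / 8) = ∑ _i : Fin m, (3 * ε ^ 2 / 8) := by
          simp [Finset.sum_const, mul_comm]
      _ ≤ _ := Finset.sum_le_sum fun i _ => hterm i
  have hmge : 40 / (3 * ε ^ 2) ≤ (m : ℝ) := by
    rw [hm]; exact Nat.le_ceil _
  have h3 : (0:ℝ) < 3 * ε ^ 2 := by positivity
  have h5 : (5:ℝ) ≤ (m:ℝ) * (3 * ε ^ 2 / 8) := by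
    rw [div_le_iff₀ h3] at hmge
    nlinarith
  nlinarith
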